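/- arXiv:1211.0233 — 2 statements merged into one kernel-verified Lean document; each statement's English description precedes it below -/
import Mathlib

section
/- Let (E, λ) and (Y, ν) be measure spaces with 0 < λ(E) < ∞, let X = E × Y with product measure μ = λ × ν, and for each y ∈ Y let λ_y be the measure on X given by λ_y(U × {y}) = λ(U). Then for every p ≥ 1, the p-modulus of the family L = {λ_y : y ∈ Y} with respect to μ equals μ(X)/λ(E)^p = ν(Y)/λ(E)^{p-1}. -/
/-!
Constant densities show `mod_p ≤ μ(X)/λ(E)^p`. Conversely, an admissible `ρ` has
`∫ ρ(·, y) dλ ≥ 1` on every fiber, so Hölder's inequality on `λ` gives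
`∫ ρ(·, y)^p dλ ≥ λ(E)^(1-p)`, and Tonelli integrates this bound over `y` against `ν`.
-/

open MeasureTheory ENNReal

/-- The `p`-modulus of a family `L` of measures on `X` with respect to `μ`:
the infimum of `∫ ρ^p dμ` over all measurable `ρ : X → [0,∞]` with `∫ ρ dλ ≥ 1`
for every `λ ∈ L`. -/
noncomputable def modFam {X : Type*} [MeasurableSpace X] (p : ℝ)
    (L : Set (Measure X)) (μ : Measure X) : ℝ≥0∞ :=
  ⨅ (ρ : X → ℝ≥0∞) (_ : Measurable ρ) (_ : ∀ lam ∈ L, 1 ≤ ∫⁻ x, ρ x ∂lam),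
    ∫⁻ x, ρ x ^ p ∂μ

section Modulus

variable {X : Type*} [MeasurableSpace X] {p : ℝ} {L : Set (Measure X)} {μ : Measure X}

theorem modFam_le_lintegral {ρ : X → ℝ≥0∞} (hρ : Measurable ρ)
    (hadm : ∀ m ∈ L, 1 ≤ ∫⁻ x, ρ x ∂m) : modFam p L μ ≤ ∫⁻ x, ρ x ^ p ∂μ :=
  iInf₂_le_of_le ρ hρ (iInf_le _ hadm)

theorem le_modFam {c : ℝ≥0∞}
    (h : ∀ ρ : X → ℝ≥0∞, Measurable ρ → (∀ m ∈ L, 1 ≤ ∫⁻ x, ρ x ∂m) → c ≤ ∫⁻ x, ρ x ^ p ∂μ) :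
    c ≤ modFam p L μ :=
  le_iInf₂ fun ρ hρ => le_iInf (h ρ hρ)

end Modulus

theorem rpow_lintegral_le_measure_univ_rpow_mul_lintegral_rpow {α : Type*} [MeasurableSpace α]
    {μ : Measure α} {p : ℝ} (hp : 1 ≤ p) {f : α → ℝ≥0∞} (hf : AEMeasurable f μ) :
    (∫⁻ a, f a ∂μ) ^ p ≤ μ Set.univ ^ (p - 1) * ∫⁻ a, f a ^ p ∂μ := by
  have hp0 : 0 < p := one_pos.trans_le hp
  have holder := eLpNorm'_le_eLpNorm'_mul_rpow_measure_univ one_pos hp hf.aestronglyMeasurable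
  simp only [eLpNorm'_eq_lintegral_enorm, enorm_eq_self, rpow_one, div_one] at holder
  calc (∫⁻ a, f a ∂μ) ^ p
      ≤ ((∫⁻ a, f a ^ p ∂μ) ^ (1 / p) * μ Set.univ ^ (1 - 1 / p)) ^ p := by gcongr
    _ = μ Set.univ ^ (p - 1) * ∫⁻ a, f a ^ p ∂μ := by
      rw [mul_rpow_of_nonneg _ _ hp0.le, ← rpow_mul, ← rpow_mul, one_div, inv_mul_cancel₀ hp0.ne',
        rpow_one, sub_mul, one_mul, inv_mul_cancel₀ hp0.ne', mul_comm]

section Fibers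

variable {E Y : Type*} [MeasurableSpace E] [MeasurableSpace Y]

/-- The measures `λ_y` on `E × Y`, i.e. `λ` carried by the horizontal fiber `E × {y}`. -/
def fiberMeasures (lam : Measure E) (Y : Type*) [MeasurableSpace Y] : Set (Measure (E × Y)) :=
  {m | ∃ y : Y, m = Measure.map (fun e => (e, y)) lam}

theorem modFam_fiberMeasures_le (lam : Measure E) (h0 : lam Set.univ ≠ 0)
    (hT : lam Set.univ ≠ ⊤) (p : ℝ) (μ : Measure (E × Y)) :
    modFam p (fiberMeasures lam Y) μ ≤ μ Set.univ / lam Set.univ ^ p := by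
  calc modFam p (fiberMeasures lam Y) μ ≤ ∫⁻ _, (lam Set.univ)⁻¹ ^ p ∂μ := by
        refine modFam_le_lintegral measurable_const ?_
        rintro m ⟨y, rfl⟩
        rw [lintegral_map measurable_const measurable_prodMk_right, lintegral_const,
          ENNReal.inv_mul_cancel h0 hT]
    _ = μ Set.univ / lam Set.univ ^ p := by
        rw [lintegral_const, inv_rpow, div_eq_mul_inv, mul_comm]

theorem measure_univ_div_le_modFam_fiberMeasures (lam : Measure E) (ν : Measure Y)
    [SFinite lam] [SFinite ν] {p : ℝ} (hp : 1 ≤ p) :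
    ν Set.univ / lam Set.univ ^ (p - 1) ≤ modFam p (fiberMeasures lam Y) (lam.prod ν) := by
  refine le_modFam fun ρ hρ hadm => ?_
  have fiber_bound (y : Y) : (lam Set.univ ^ (p - 1))⁻¹ ≤ ∫⁻ e, ρ (e, y) ^ p ∂lam := by
    have hone : 1 ≤ ∫⁻ e, ρ (e, y) ∂lam := by
      simpa only [lintegral_map hρ measurable_prodMk_right] using hadm _ ⟨y, rfl⟩
    have hmul : 1 ≤ lam Set.univ ^ (p - 1) * ∫⁻ e, ρ (e, y) ^ p ∂lam :=
      (one_le_rpow hone (one_pos.trans_le hp)).trans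
        (rpow_lintegral_le_measure_univ_rpow_mul_lintegral_rpow hp
          (hρ.comp measurable_prodMk_right).aemeasurable)
    have hne : lam Set.univ ^ (p - 1) * ∫⁻ e, ρ (e, y) ^ p ∂lam ≠ 0 :=
      (one_pos.trans_le hmul).ne'
    exact (inv_le_iff_le_mul (fun _ => left_ne_zero_of_mul hne)
      (fun _ => right_ne_zero_of_mul hne)).2 hmul
  calc ν Set.univ / lam Set.univ ^ (p - 1) = ∫⁻ _, (lam Set.univ ^ (p - 1))⁻¹ ∂ν := by
        rw [lintegral_const, div_eq_mul_inv, mul_comm]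
    _ ≤ ∫⁻ y, ∫⁻ e, ρ (e, y) ^ p ∂lam ∂ν := lintegral_mono fiber_bound
    _ = ∫⁻ x, ρ x ^ p ∂(lam.prod ν) :=
        (lintegral_prod_symm' _ (hρ.pow_const p)).symm

theorem prod_univ_div_rpow_eq (lam : Measure E) (ν : Measure Y) [SFinite ν]
    (h0 : lam Set.univ ≠ 0) (hT : lam Set.univ ≠ ⊤) (p : ℝ) :
    (lam.prod ν) Set.univ / lam Set.univ ^ p = ν Set.univ / lam Set.univ ^ (p - 1) := by
  conv_lhs => rw [← Set.univ_prod_univ, Measure.prod_prod, ← add_sub_cancel 1 p,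
    rpow_add _ _ h0 hT, rpow_one, ENNReal.mul_div_mul_left _ _ h0 hT]

end Fibers

/-- Modulus of the family of horizontal fibers of a product measure:
`mod_p {λ_y : y ∈ Y} = μ(X)/λ(E)^p = ν(Y)/λ(E)^{p-1}`. -/
theorem product_modulus {E Y : Type*} [MeasurableSpace E] [MeasurableSpace Y]
    (lam : Measure E) (ν : Measure Y) [SigmaFinite lam] [SigmaFinite ν]
    (hpos : 0 < lam Set.univ) (hfin : lam Set.univ < ⊤)
    (p : ℝ) (hp : 1 ≤ p) :
    modFam p {m : Measure (E × Y) | ∃ y : Y, m = Measure.map (fun e => (e, y)) lam}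
        (lam.prod ν)
      = (lam.prod ν) Set.univ / (lam Set.univ) ^ p ∧
    (lam.prod ν) Set.univ / (lam Set.univ) ^ p
      = ν Set.univ / (lam Set.univ) ^ (p - 1) := by
  have hratio := prod_univ_div_rpow_eq lam ν hpos.ne' hfin.ne p
  refine ⟨le_antisymm (modFam_fiberMeasures_le lam hpos.ne' hfin.ne p _) ?_, hratio⟩
  rw [hratio]
  exact measure_univ_div_le_modFam_fiberMeasures lam ν hp
end

section
/- Let f : ℝᴺ → Y be a homeomorphism onto a metric space Y, E ⊂ ℝⁿ a closed set (viewed inside ℝᴺ = ℝⁿ × ℝ^{N-n}), and α ∈ (0, N). Then the set E_f(E, α) = {y ∈ ℝ^{N-n} : H^∞_α(f(E + y)) > 0} is a Borel subset of ℝ^{N-n}, where H^∞_α denotes the α-dimensional Hausdorff content. -/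
open MeasureTheory ENNReal NNReal Set

/-- The `α`-dimensional Hausdorff content of a set `A` in an extended metric
space: the infimum of `∑ rᵢ^α` over countable covers of `A` by balls `B(xᵢ,rᵢ)`
(with no bound on the radii). -/
noncomputable def hausdorffContent {Z : Type*} [EMetricSpace Z] (α : ℝ) (A : Set Z) : ℝ≥0∞ :=
  ⨅ (x : ℕ → Z) (r : ℕ → ℝ≥0∞) (_ : A ⊆ ⋃ n, EMetric.ball (x n) (r n)), ∑' n, r n ^ α

open Filter Topology

/-!
Exhausting `E` by compact sets `Kₘ`, the content of `f(E + y)` vanishes iff that of every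
`f(Kₘ + y)` does, since sets of zero content are closed under countable unions. For compact `K`,
`y ↦ H^∞_α(f(K + y))` is upper semicontinuous: a cover of `f(K + y)` by open balls is an open
neighbourhood of it, and by the tube lemma it still covers `f(K + y')` for `y'` near `y`. Upper
semicontinuous functions are Borel, so each `{y : 0 < H^∞_α(f(Kₘ + y))}` is Borel.
-/

section HausdorffContent

variable {Z : Type*} [EMetricSpace Z] (α : ℝ)

lemma hausdorffContent_mono {A B : Set Z} (h : A ⊆ B) :
    hausdorffContent α A ≤ hausdorffContent α B :=
  le_iInf₂ fun x r => le_iInf fun hB => iInf₂_le_of_le x r (iInf_le_of_le (h.trans hB) le_rfl)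

lemma hausdorffContent_lt_iff {A : Set Z} {c : ℝ≥0∞} :
    hausdorffContent α A < c ↔ ∃ (x : ℕ → Z) (r : ℕ → ℝ≥0∞),
      A ⊆ ⋃ m, Metric.eball (x m) (r m) ∧ ∑' m, r m ^ α < c := by
  simp only [hausdorffContent, iInf_lt_iff, exists_prop]
  rfl

lemma hausdorffContent_le_tsum {ι : Type*} [Denumerable ι] {A : Set Z} (x : ι → Z)
    (r : ι → ℝ≥0∞) (hA : A ⊆ ⋃ i, Metric.eball (x i) (r i)) :
    hausdorffContent α A ≤ ∑' i, r i ^ α := by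
  let e : ℕ ≃ ι := (Denumerable.eqv ι).symm
  have hA' : A ⊆ ⋃ m, Metric.eball (x (e m)) (r (e m)) := by
    intro z hz
    obtain ⟨i, hi⟩ := mem_iUnion.1 (hA hz)
    exact mem_iUnion.2 ⟨e.symm i, by simpa using hi⟩
  exact iInf₂_le_of_le (x ∘ e) (r ∘ e) (iInf_le_of_le hA' (e.tsum_eq (fun i => r i ^ α)).le)

lemma hausdorffContent_iUnion_eq_zero {A : ℕ → Set Z} (h : ∀ m, hausdorffContent α (A m) = 0) :
    hausdorffContent α (⋃ m, A m) = 0 := by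
  refine le_antisymm (le_of_forall_gt fun c hc => ?_) bot_le
  obtain ⟨ε, hε_pos, hε_sum⟩ := ENNReal.exists_pos_sum_of_countable hc.ne' ℕ
  have hcover : ∀ m, ∃ (x : ℕ → Z) (r : ℕ → ℝ≥0∞),
      A m ⊆ ⋃ i, Metric.eball (x i) (r i) ∧ ∑' i, r i ^ α < ε m := fun m =>
    (hausdorffContent_lt_iff α).1 ((h m).trans_lt (by exact_mod_cast hε_pos m))
  choose x r hxr hr using hcover
  calc hausdorffContent α (⋃ m, A m)
      ≤ ∑' p : ℕ × ℕ, r p.1 p.2 ^ α := by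
        refine hausdorffContent_le_tsum α (fun p : ℕ × ℕ => x p.1 p.2)
          (fun p : ℕ × ℕ => r p.1 p.2) ?_
        refine iUnion_subset fun m => (hxr m).trans (iUnion_subset fun i => ?_)
        exact subset_iUnion (fun p : ℕ × ℕ => Metric.eball (x p.1 p.2) (r p.1 p.2)) (m, i)
    _ = ∑' m, ∑' i, r m i ^ α := ENNReal.tsum_prod (f := fun m i => r m i ^ α)
    _ ≤ ∑' m, (ε m : ℝ≥0∞) := ENNReal.tsum_le_tsum fun m => (hr m).le
    _ < c := hε_sum

lemma hausdorffContent_iUnion_eq_zero_iff {A : ℕ → Set Z} :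
    hausdorffContent α (⋃ m, A m) = 0 ↔ ∀ m, hausdorffContent α (A m) = 0 :=
  ⟨fun h m => le_antisymm (h ▸ hausdorffContent_mono α (subset_iUnion A m)) bot_le,
    hausdorffContent_iUnion_eq_zero α⟩

lemma exists_isOpen_superset_hausdorffContent_lt {A : Set Z} {c : ℝ≥0∞}
    (h : hausdorffContent α A < c) :
    ∃ U, IsOpen U ∧ A ⊆ U ∧ ∀ B ⊆ U, hausdorffContent α B < c := by
  obtain ⟨x, r, hA, hr⟩ := (hausdorffContent_lt_iff α).1 h
  exact ⟨_, isOpen_iUnion fun m => Metric.isOpen_eball, hA,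
    fun B hB => (hausdorffContent_lt_iff α).2 ⟨x, r, hB, hr⟩⟩

end HausdorffContent

section Slices

variable {X W Y : Type*} [TopologicalSpace X] [TopologicalSpace W] [EMetricSpace Y]
  {f : X × W → Y} (hf : Continuous f) (α : ℝ)
include hf

lemma upperSemicontinuous_hausdorffContent_image_prod_singleton {K : Set X} (hK : IsCompact K) :
    UpperSemicontinuous fun y : W => hausdorffContent α (f '' (K ×ˢ {y})) := by
  intro y c hy
  obtain ⟨U, hU, hKU, hUc⟩ := exists_isOpen_superset_hausdorffContent_lt α hy
  have hnear : ∀ᶠ y' in 𝓝 y, ∀ x ∈ K, f (x, y') ∈ U := by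
    refine hK.eventually_forall_of_forall_eventually fun x hx => ?_
    exact (hf.comp continuous_swap).continuousAt.preimage_mem_nhds
      (hU.mem_nhds (hKU ⟨(x, y), ⟨hx, rfl⟩, rfl⟩))
  filter_upwards [hnear] with y' hy'
  refine hUc _ ?_
  rintro _ ⟨⟨x, _⟩, ⟨hx, rfl⟩, rfl⟩
  exact hy' x hx

lemma measurableSet_setOf_hausdorffContent_image_prod_singleton_pos [MeasurableSpace W]
    [OpensMeasurableSpace W] {E : Set X} (hE : IsSigmaCompact E) :
    MeasurableSet {y : W | 0 < hausdorffContent α (f '' (E ×ˢ {y}))} := by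
  obtain ⟨K, hK, rfl⟩ := hE
  have hslices : {y : W | 0 < hausdorffContent α (f '' ((⋃ m, K m) ×ˢ {y}))} =
      ⋃ m, {y : W | 0 < hausdorffContent α (f '' (K m ×ˢ {y}))} := by
    ext y
    simp only [mem_ofPred_eq, mem_iUnion, pos_iff_ne_zero, iUnion_prod_const, image_iUnion,
      Ne, hausdorffContent_iUnion_eq_zero_iff, not_forall]
  rw [hslices]
  exact MeasurableSet.iUnion fun m =>
    measurableSet_lt measurable_const
      (upperSemicontinuous_hausdorffContent_image_prod_singleton hf α (hK m)).measurable

end Slices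

theorem exceptional_set_borel_general {n k : ℕ} {Y : Type*} [MetricSpace Y]
    (f : (EuclideanSpace ℝ (Fin n) × EuclideanSpace ℝ (Fin k)) ≃ₜ Y)
    (E : Set (EuclideanSpace ℝ (Fin n))) (hE : IsClosed E)
    (α : ℝ) :
    MeasurableSet {y : EuclideanSpace ℝ (Fin k) |
      0 < hausdorffContent α (f '' (E ×ˢ ({y} : Set (EuclideanSpace ℝ (Fin k)))))} :=
  measurableSet_setOf_hausdorffContent_image_prod_singleton_pos f.continuous α
    (isSigmaCompact_univ.of_isClosed_subset hE (subset_univ E))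

/-- For a homeomorphism `f : ℝᴺ → Y` (with `ℝᴺ = ℝⁿ × ℝ^{N-n}`), a closed set
`E ⊂ ℝⁿ` and `0 < α < N`, the set `{y : H^∞_α(f(E + y)) > 0}` is Borel. -/
theorem exceptional_set_borel {n k : ℕ} {Y : Type*} [MetricSpace Y]
    (f : (EuclideanSpace ℝ (Fin n) × EuclideanSpace ℝ (Fin k)) ≃ₜ Y)
    (E : Set (EuclideanSpace ℝ (Fin n))) (hE : IsClosed E)
    (α : ℝ) (hα0 : 0 < α) (hαN : α < n + k) :
    MeasurableSet {y : EuclideanSpace ℝ (Fin k) |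
      0 < hausdorffContent α (f '' (E ×ˢ ({y} : Set (EuclideanSpace ℝ (Fin k)))))} :=
  exceptional_set_borel_general f E hE α
end
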